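/- Consider the counter dynamics of a tape-symbol object during one TM-step simulation: it evolves through counter values 0,1,...,m+5 via the rules (increment inside membrane for k < φ(a), dissolve at k = φ(a), increment outside for φ(a) < k ≤ m, then enter primed membrane at m+1, wait at m+2 and m+3, dissolve or be deleted at m+4, re-enter at m+5 resetting to 0). Then every tape-symbol object not under the head returns to counter 0 in the membrane (i, j+1) after exactly m+6 steps, and exactly one dissolution of each of the membranes (i,j) and (i,j)' occurs per phase. -/

import Mathlib

/-!
Within a phase the counter is the elapsed time: after `t ≤ m + 5` steps the object is in state
`(t, symLoc m ta t)`, and one more step resets it to `(0, 0)`. Since the state at time `t` has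
first coordinate `t`, each state of the phase is visited exactly once, in particular the two
dissolution states `(ta, 0)` and `(m + 4, 2)`.
-/

/-- Local state of a tape-symbol object: a counter together with a location
(`0` = inside membrane `(i,j)`, `1` = in the skin, `2` = inside `(i,j)'`).
One step of its deterministic evolution (when not under the head), with
`ta = φ(a)` the dissolution time and `m` the alphabet size: increment inside
for `k < ta`, dissolve at `k = ta`, increment outside for `ta < k ≤ m`, enter
the primed membrane at `m+1`, wait at `m+2` and `m+3`, dissolve the primed
membrane at `m+4`, re-enter the next membrane at `m+5` resetting to `0`. -/
def symStep (m ta : ℕ) (c : ℕ × ℕ) : ℕ × ℕ :=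
  let k := c.1
  if k < ta then (k + 1, c.2)
  else if k = ta then (k + 1, 1)
  else if k ≤ m then (k + 1, 1)
  else if k = m + 1 then (k + 1, 2)
  else if k = m + 2 ∨ k = m + 3 then (k + 1, 2)
  else if k = m + 4 then (k + 1, 1)
  else (0, 0)

def symLoc (m ta t : ℕ) : ℕ :=
  if t ≤ ta then 0 else if t ≤ m + 1 then 1 else if t ≤ m + 4 then 2 else 1

theorem Finset.card_filter_range_eq_of_fst_eq {α : Type*} [DecidableEq α] {g : ℕ → ℕ × α}
    {n s : ℕ} (hg : ∀ t < n, (g t).1 = t) (hs : s < n) :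
    ((Finset.range n).filter fun t => g t = g s).card = 1 := by
  have hfilter : ((Finset.range n).filter fun t => g t = g s) = {s} := by
    ext t
    simp only [Finset.mem_filter, Finset.mem_range, Finset.mem_singleton]
    refine ⟨fun ⟨ht, hgt⟩ => ?_, fun hts => ⟨hts ▸ hs, hts ▸ rfl⟩⟩
    rw [← hg t ht, ← hg s hs, hgt]
  rw [hfilter, Finset.card_singleton]

section symStep

variable {m ta : ℕ}

theorem symStep_counter_symLoc (hta : ta ≤ m) {t : ℕ} (ht : t < m + 5) :
    symStep m ta (t, symLoc m ta t) = (t + 1, symLoc m ta (t + 1)) := by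
  simp only [symStep, symLoc]
  split_ifs <;> simp only [Prod.mk.injEq] <;> omega

theorem iterate_symStep_of_le (hta : ta ≤ m) {t : ℕ} (ht : t ≤ m + 5) :
    (symStep m ta)^[t] (0, 0) = (t, symLoc m ta t) := by
  induction t with
  | zero => simp [symLoc]
  | succ t ih =>
    rw [Function.iterate_succ_apply', ih (by omega), symStep_counter_symLoc hta (by omega)]

theorem iterate_symStep_period (hta : ta ≤ m) : (symStep m ta)^[m + 6] (0, 0) = (0, 0) := by
  rw [Function.iterate_succ_apply', iterate_symStep_of_le hta le_rfl]
  simp only [symStep]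
  split_ifs <;> first | rfl | omega

theorem card_filter_iterate_symStep_eq (hta : ta ≤ m) {s : ℕ} (hs : s ≤ m + 5) :
    ((Finset.range (m + 6)).filter
      fun t => (symStep m ta)^[t] (0, 0) = (s, symLoc m ta s)).card = 1 := by
  rw [← iterate_symStep_of_le hta hs]
  refine Finset.card_filter_range_eq_of_fst_eq (fun t ht => ?_) (Nat.lt_succ_of_le hs)
  rw [iterate_symStep_of_le hta (by omega)]

end symStep

/-- A tape-symbol object not under the head returns to counter `0` inside the
membrane of the next phase after exactly `m+6` steps, and exactly one
dissolution of the membrane `(i,j)` (a step from state `(φ(a), 0)`) and exactly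
one dissolution of `(i,j)'` (a step from state `(m+4, 2)`) occur per phase. -/
theorem symbol_cycle (m ta : ℕ) (hta : 1 ≤ ta ∧ ta ≤ m) :
    (symStep m ta)^[m + 6] (0, 0) = (0, 0) ∧
    ((Finset.range (m + 6)).filter
      fun t => (symStep m ta)^[t] (0, 0) = (ta, 0)).card = 1 ∧
    ((Finset.range (m + 6)).filter
      fun t => (symStep m ta)^[t] (0, 0) = (m + 4, 2)).card = 1 := by
  have hle := hta.2
  have hloc_ta : symLoc m ta ta = 0 := if_pos le_rfl
  have hloc_primed : symLoc m ta (m + 4) = 2 := by simp only [symLoc]; split_ifs <;> omega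
  refine ⟨iterate_symStep_period hle, ?_, ?_⟩
  · simpa only [hloc_ta] using card_filter_iterate_symStep_eq hle (s := ta) (by omega)
  · simpa only [hloc_primed] using card_filter_iterate_symStep_eq hle (s := m + 4) (by omega)
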